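/- With the data of K(8n,σ,τ), assume additionally that the bicharacter η(g,h) = τ(g,h)τ(h,g)^{-1} satisfies η(a,b) = -1. Then for all i ≥ 0, h(a, a^{2i+1}b) = τ(b,a)/τ(b, a^{2i+1}), where h(t₁,t₂) = τ(t₁,t₂)/τ(t₂◁x, t₁◁x). -/

import Mathlib

/-- The group `G = Z_{2n} × Z_2`, written additively. -/
abbrev GK (n : ℕ) := ZMod (2 * n) × ZMod 2

/-- The generator `a` of order `2n`. -/
def aK (n : ℕ) : GK n := (1, 0)

/-- The generator `b` of order `2`. -/
def bK (n : ℕ) : GK n := (0, 1)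

/-- The order-2 automorphism `◁x` of `G` determined by `a ↦ ab`, `b ↦ b`. -/
def xK (n : ℕ) : GK n → GK n :=
  fun g => (g.1, g.2 + ZMod.castHom (dvd_mul_right 2 n) (ZMod 2) g.1)

/-- `h(t₁,t₂) = τ(t₁,t₂)/τ(t₂◁x, t₁◁x)`. -/
def hK {k : Type*} [Field k] (n : ℕ) (τ : GK n → GK n → kˣ) (t₁ t₂ : GK n) : kˣ :=
  τ t₁ t₂ * (τ (xK n t₂) (xK n t₁))⁻¹

/-!
Write `A = a^{2i+1}`. Since `◁x` sends `a ↦ ab` and `Ab ↦ A`, `h(a, Ab) = τ(a, Ab)/τ(A, ab)`, and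
two instances of the cocycle identity turn this ratio into `η(a, A) τ(a, b)/τ(A, b)`. The form `η` of
a 2-cocycle on an abelian group is a bicharacter, so `η(a, A) = η(a, a)^{2i+1} = 1` and
`η(A, b) = η(a, b)^{2i+1} = η(a, b)` as `η(a, b) = -1`. Writing `τ(a, b) = η(a, b) τ(b, a)` and
`τ(A, b) = η(A, b) τ(b, A)`, the two equal factors cancel.
-/

section CocycleComm

variable {G M : Type*} [CommGroup M]

/-- The form `η` of the paper. -/
def cocycleComm (τ : G → G → M) (g h : G) : M := τ g h * (τ h g)⁻¹

theorem cocycleComm_mul_swap (τ : G → G → M) (g h : G) :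
    cocycleComm τ g h * τ h g = τ g h :=
  inv_mul_cancel_right _ _

theorem inv_cocycleComm (τ : G → G → M) (g h : G) :
    (cocycleComm τ g h)⁻¹ = cocycleComm τ h g := by
  simp only [cocycleComm, mul_inv_rev, inv_inv]

theorem cocycleComm_self (τ : G → G → M) (g : G) : cocycleComm τ g g = 1 :=
  mul_inv_cancel _

variable [AddCommGroup G] {τ : G → G → M}

theorem cocycle_mul_inv_add_swap
    (hcoc : ∀ g h l : G, τ g h * τ (g + h) l = τ h l * τ g (h + l)) (g h l : G) :
    τ g (h + l) * (τ h (g + l))⁻¹ = cocycleComm τ g h * (τ g l * (τ h l)⁻¹) := by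
  have e1 : τ g (h + l) = τ g h * τ (g + h) l * (τ h l)⁻¹ :=
    eq_mul_inv_of_mul_eq (by rw [hcoc, mul_comm])
  have e2 : τ h (g + l) = τ h g * τ (g + h) l * (τ g l)⁻¹ :=
    eq_mul_inv_of_mul_eq (by rw [add_comm g h, hcoc, mul_comm])
  rw [e1, e2]
  apply Additive.ofMul.injective
  simp only [cocycleComm, ofMul_mul, ofMul_inv]
  abel

theorem cocycleComm_add_left
    (hcoc : ∀ g h l : G, τ g h * τ (g + h) l = τ h l * τ g (h + l)) (g h l : G) :
    cocycleComm τ (g + h) l = cocycleComm τ g l * cocycleComm τ h l := by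
  have e1 : τ (g + h) l = τ h l * τ g (h + l) * (τ g h)⁻¹ :=
    eq_mul_inv_of_mul_eq (by rw [mul_comm, hcoc])
  have e2 : τ l (g + h) = cocycleComm τ l g * (τ l h * (τ g h)⁻¹) * τ g (h + l) := by
    rw [← cocycle_mul_inv_add_swap hcoc, add_comm l h, inv_mul_cancel_right]
  rw [cocycleComm, e1, e2, ← inv_cocycleComm τ g l]
  apply Additive.ofMul.injective
  simp only [cocycleComm, ofMul_mul, ofMul_inv]
  abel

theorem cocycleComm_zero_left
    (hcoc : ∀ g h l : G, τ g h * τ (g + h) l = τ h l * τ g (h + l)) (l : G) :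
    cocycleComm τ 0 l = 1 := by
  have h := cocycleComm_add_left hcoc 0 0 l
  rw [add_zero] at h
  exact mul_eq_left.mp h.symm

theorem cocycleComm_nsmul_left
    (hcoc : ∀ g h l : G, τ g h * τ (g + h) l = τ h l * τ g (h + l)) (g l : G) (m : ℕ) :
    cocycleComm τ (m • g) l = cocycleComm τ g l ^ m := by
  induction m with
  | zero => rw [zero_nsmul, pow_zero, cocycleComm_zero_left hcoc]
  | succ m ih => rw [succ_nsmul, cocycleComm_add_left hcoc, ih, pow_succ]

end CocycleComm

section ActionOfX

variable (n : ℕ)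

theorem xK_add (g h : GK n) : xK n (g + h) = xK n g + xK n h := by
  ext <;> simp [xK]; abel

theorem xK_aK : xK n (aK n) = aK n + bK n := by
  ext <;> simp [xK, aK, bK]

theorem xK_bK : xK n (bK n) = bK n := by
  ext <;> simp [xK, bK]

theorem two_nsmul_bK : 2 • bK n = 0 := by
  ext <;> simp [bK]; decide

theorem xK_odd_nsmul_aK_add_bK (i : ℕ) :
    xK n ((2 * i + 1) • aK n + bK n) = (2 * i + 1) • aK n := by
  have ha : xK n ((2 * i + 1) • aK n) = (2 * i + 1) • (aK n + bK n) := by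
    rw [← xK_aK]
    exact map_nsmul (AddMonoidHom.mk' (xK n) (xK_add n)) _ _
  have hb : (2 * i + 1 + 1) • bK n = 0 := by
    rw [show 2 * i + 1 + 1 = 2 * (i + 1) by ring, mul_nsmul, two_nsmul_bK, nsmul_zero]
  rw [xK_add, ha, xK_bK, nsmul_add, add_assoc, ← succ_nsmul, hb, add_zero]

end ActionOfX

theorem hK_a_odd_b_general {k : Type*} [Field k] (n : ℕ)
    (τ : GK n → GK n → kˣ)
    (hcoc : ∀ g h l : GK n, τ g h * τ (g + h) l = τ h l * τ g (h + l))
    (hηab : τ (aK n) (bK n) * (τ (bK n) (aK n))⁻¹ = -1) :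
    ∀ i : ℕ,
      hK n τ (aK n) ((2 * i + 1) • aK n + bK n) =
        τ (bK n) (aK n) * (τ (bK n) ((2 * i + 1) • aK n))⁻¹ := by
  intro i
  set a := aK n
  set b := bK n
  set A := (2 * i + 1) • a
  have hηaA : cocycleComm τ a A = 1 := by
    rw [← inv_cocycleComm, cocycleComm_nsmul_left hcoc, cocycleComm_self, one_pow, inv_one]
  have hηAb : cocycleComm τ A b = cocycleComm τ a b := by
    rw [cocycleComm_nsmul_left hcoc, cocycleComm, hηab, Odd.neg_one_pow ⟨i, rfl⟩]
  calc hK n τ a (A + b) = τ a (A + b) * (τ A (a + b))⁻¹ := by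
        rw [hK, xK_aK, xK_odd_nsmul_aK_add_bK]
    _ = cocycleComm τ a A * (τ a b * (τ A b)⁻¹) := cocycle_mul_inv_add_swap hcoc a A b
    _ = cocycleComm τ a b * τ b a * (cocycleComm τ a b * τ b A)⁻¹ := by
        rw [hηaA, one_mul, cocycleComm_mul_swap, ← hηAb, cocycleComm_mul_swap]
    _ = τ b a * (τ b A)⁻¹ := mul_div_mul_left_eq_div _ _ _

/-- With the data of `K(8n,σ,τ)` and `η(a,b) = η(b,a) = -1` (where
`η(g,h) = τ(g,h)τ(h,g)⁻¹`), for all `i ≥ 0`: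
`h(a, a^{2i+1}b) = τ(b,a)/τ(b, a^{2i+1})`. -/
theorem hK_a_odd_b {k : Type*} [Field k] (n : ℕ) (hn : 0 < n)
    (τ : GK n → GK n → kˣ)
    (hcoc : ∀ g h l : GK n, τ g h * τ (g + h) l = τ h l * τ g (h + l))
    (hτ1 : ∀ g : GK n, τ g 0 = 1) (hτ1' : ∀ g : GK n, τ 0 g = 1)
    (hηab : τ (aK n) (bK n) * (τ (bK n) (aK n))⁻¹ = -1)
    (hηba : τ (bK n) (aK n) * (τ (aK n) (bK n))⁻¹ = -1) :
    ∀ i : ℕ,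
      hK n τ (aK n) ((2 * i + 1) • aK n + bK n) =
        τ (bK n) (aK n) * (τ (bK n) ((2 * i + 1) • aK n))⁻¹ :=
  hK_a_odd_b_general n τ hcoc hηab
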